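/- arXiv:1709.09613 — 6 statements merged into one kernel-verified Lean document; each statement's English description precedes it below -/
import Mathlib

section
/- Let Y be a nonnegative real random variable with distribution function F_Y. Then E[Y ∧ t] / (max{t(1 − F_Y(t)), 1}) = o(t) as t → ∞; that is, (1/t) · E[Y ∧ t] / (max{t(1 − F_Y(t)), 1}) → 0 as t → ∞. -/
open MeasureTheory ProbabilityTheory Filter Set

/-- The ratio `E[Y ∧ t] / (t(1 - F_Y(t)) ∨ 1)` is `o(t)` as `t → ∞`. -/
theorem truncated_mean_ratio_little_o {Ω : Type} [MeasurableSpace Ω]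
    (P : Measure Ω) [IsProbabilityMeasure P] (Y : Ω → ℝ)
    (hY : Measurable Y) (hY0 : ∀ ω, 0 ≤ Y ω) :
    Filter.Tendsto
      (fun t : ℝ =>
        (1 / t) * ((∫ ω, min (Y ω) t ∂P) /
          max (t * (1 - (P {ω | Y ω ≤ t}).toReal)) 1))
      Filter.atTop (nhds 0) := by
  -- The dominating function: ∫ min (Y ω / t) 1 → 0 by dominated convergence
  have h0 : Tendsto (fun t : ℝ => ∫ ω, min (Y ω / t) 1 ∂P) atTop (nhds 0) := by
    have := MeasureTheory.tendsto_integral_filter_of_dominated_convergence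
      (μ := P) (F := fun (t : ℝ) ω => min (Y ω / t) 1) (f := fun _ => (0 : ℝ))
      (bound := fun _ => (1 : ℝ))
      (by
        filter_upwards with t
        exact ((hY.div_const t).min measurable_const).aestronglyMeasurable)
      (by
        filter_upwards [eventually_ge_atTop (1 : ℝ)] with t ht
        filter_upwards with ω
        have h1 : 0 ≤ Y ω / t := div_nonneg (hY0 ω) (by linarith)
        have h2 : min (Y ω / t) 1 ≤ 1 := min_le_right _ _
        have h3 : 0 ≤ min (Y ω / t) 1 := le_min h1 zero_le_one
        rw [Real.norm_eq_abs, abs_of_nonneg h3]; exact h2)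
      (integrable_const 1)
      (by
        filter_upwards with ω
        have hdiv : Tendsto (fun t : ℝ => Y ω / t) atTop (nhds 0) :=
          Tendsto.div_atTop tendsto_const_nhds tendsto_id
        have := hdiv.min (tendsto_const_nhds (x := (1 : ℝ)))
        simpa using this)
    simpa using this
  refine squeeze_zero' ?_ ?_ h0
  · filter_upwards [eventually_ge_atTop (1 : ℝ)] with t ht
    have ht0 : (0 : ℝ) < t := by linarith
    have hg : 0 ≤ ∫ ω, min (Y ω) t ∂P :=
      integral_nonneg fun ω => le_min (hY0 ω) ht0.le
    have hD : (0 : ℝ) < max (t * (1 - (P {ω | Y ω ≤ t}).toReal)) 1 :=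
      lt_of_lt_of_le zero_lt_one (le_max_right _ _)
    positivity
  · filter_upwards [eventually_ge_atTop (1 : ℝ)] with t ht
    have ht0 : (0 : ℝ) < t := by linarith
    have hg : 0 ≤ ∫ ω, min (Y ω) t ∂P :=
      integral_nonneg fun ω => le_min (hY0 ω) ht0.le
    have hstep : (∫ ω, min (Y ω) t ∂P) /
        max (t * (1 - (P {ω | Y ω ≤ t}).toReal)) 1 ≤ ∫ ω, min (Y ω) t ∂P :=
      div_le_self hg (le_max_right _ _)
    calc (1 / t) * ((∫ ω, min (Y ω) t ∂P) /
          max (t * (1 - (P {ω | Y ω ≤ t}).toReal)) 1)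
        ≤ (1 / t) * ∫ ω, min (Y ω) t ∂P := by
          apply mul_le_mul_of_nonneg_left hstep
          positivity
      _ = ∫ ω, (1 / t) * min (Y ω) t ∂P := (integral_const_mul _ _).symm
      _ = ∫ ω, min (Y ω / t) 1 ∂P := by
          congr 1; funext ω
          rcases le_total (Y ω) t with h | h
          · rw [min_eq_left h, min_eq_left (by
              rw [div_le_one ht0]; exact h)]
            field_simp
          · rw [min_eq_right h, min_eq_right (by
              rw [le_div_iff₀ ht0]; simpa using h)]
            field_simp
end

section
/- Fix d ≥ 2. There exists a distribution for a nonnegative random variable t_e such that, letting Y be the minimum of 2d i.i.d. copies of t_e and F_Y its distribution function, the inequality E[Y ∧ t] / (max{t(1 − F_Y(t)), 1}) ≥ t/(2 log t) holds for an unbounded set of t > 0. (For instance, one may take the distribution determined by P(t_e > t) = (log x_n)^{−1/(2d)} for t ∈ [x_{n−1}, x_n) and P(t_e > t) = 1 for t < 3, where x_1 = 3 and x_{n+1} = x_n^{x_n}.) -/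
/-!
Let `a₀ = 1`, `aₙ₊₁ = exp aₙ`, and let `t_e` take the values `aₙ` with
`P(t_e ≥ aₙ₊₁) = (2 aₙ)^(-1/(2d))`. At `t = aₙ₊₁` the minimum `Y` of `2d` copies satisfies
`P(Y ≥ t) = 1 / (2 aₙ) = 1 / (2 log t)`, so `E[Y ∧ t] ≥ t / (2 log t)` by Markov's inequality,
while `P(Y > t) = 1 / (2 aₙ₊₁) = 1 / (2t)`, so `t (1 - F_Y(t)) = 1/2` and the denominator is `1`.
The distribution is realised as a quantile transform of the uniform law on `(0, 1]`, and the
`2d` copies as the coordinates of the product space.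
-/

open MeasureTheory ProbabilityTheory Filter Set Topology

theorem lt_ciInf_iff_of_finite {ι α : Type*} [ConditionallyCompleteLinearOrder α] [Finite ι]
    [Nonempty ι] {f : ι → α} {a : α} : a < ⨅ i, f i ↔ ∀ i, a < f i := by
  refine ⟨fun h i => h.trans_le (ciInf_le (Finite.bddBelow_range f) i), fun h => ?_⟩
  obtain ⟨i, hi⟩ := exists_eq_ciInf_of_finite (f := f)
  exact hi ▸ h i

section IidCopies

variable {ι α : Type*} [Fintype ι] [MeasurableSpace α] {μ : Measure α} [IsProbabilityMeasure μ]

theorem MeasureTheory.Measure.pi_setOf_forall_mem (s : Set α) :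
    Measure.pi (fun _ : ι => μ) {ω | ∀ i, ω i ∈ s} = μ s ^ Fintype.card ι := by
  have : {ω : ι → α | ∀ i, ω i ∈ s} = univ.pi fun _ => s := by ext; simp
  rw [this, Measure.pi_pi, Finset.prod_const, Finset.card_univ]

theorem MeasureTheory.Measure.map_pi_comp_eval {f : α → ℝ} (hf : Measurable f) (i : ι) :
    (Measure.pi fun _ => μ).map (fun ω => f (ω i)) = μ.map f := by
  rw [show (fun ω : ι → α => f (ω i)) = f ∘ Function.eval i from rfl,
    ← Measure.map_map hf (measurable_pi_apply i), (measurePreserving_eval _ i).map_eq]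

variable [Nonempty ι] (f : α → ℝ) (t : ℝ)

theorem MeasureTheory.Measure.pi_le_iInf_comp :
    Measure.pi (fun _ : ι => μ) {ω | t ≤ ⨅ i, f (ω i)} = μ {x | t ≤ f x} ^ Fintype.card ι := by
  simp_rw [le_ciInf_iff (Finite.bddBelow_range _)]
  exact Measure.pi_setOf_forall_mem {x | t ≤ f x}

theorem MeasureTheory.Measure.pi_lt_iInf_comp :
    Measure.pi (fun _ : ι => μ) {ω | t < ⨅ i, f (ω i)} = μ {x | t < f x} ^ Fintype.card ι := by
  simp_rw [lt_ciInf_iff_of_finite]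
  exact Measure.pi_setOf_forall_mem {x | t < f x}

end IidCopies

theorem mul_measureReal_le_integral_min {Ω : Type*} [MeasurableSpace Ω] {P : Measure Ω}
    [IsFiniteMeasure P] {Y : Ω → ℝ} (hY : Measurable Y) (hY0 : ∀ ω, 0 ≤ Y ω) {t : ℝ}
    (ht : 0 ≤ t) : t * P.real {ω | t ≤ Y ω} ≤ ∫ ω, min (Y ω) t ∂P := by
  have hmin0 : ∀ ω, 0 ≤ min (Y ω) t := fun ω => le_min (hY0 ω) ht
  have hint : Integrable (fun ω => min (Y ω) t) P :=
    .of_bound (hY.min measurable_const).aestronglyMeasurable t <| ae_of_all _ fun ω => by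
      rw [Real.norm_of_nonneg (hmin0 ω)]; exact min_le_right _ _
  simpa using mul_meas_ge_le_integral_of_nonneg (ae_of_all _ hmin0) hint t

noncomputable def quantileIndex (q : ℕ → ℝ) (u : ℝ) : ℕ := sInf {n | q n ≤ u}

section QuantileIndex

variable {q : ℕ → ℝ}

theorem quantileIndex_preimage_Ioi (hq : Antitone q) (hpos : ∀ n, 0 < q n)
    (hlim : Tendsto q atTop (𝓝 0)) (N : ℕ) : quantileIndex q ⁻¹' Ioi N = Ioo 0 (q N) := by
  ext u
  simp only [mem_preimage, mem_Ioi, mem_Ioo, quantileIndex]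
  rcases le_or_gt u 0 with hu | hu
  · have : {n | q n ≤ u} = ∅ :=
      eq_empty_of_forall_notMem fun n hn => (hpos n).not_ge (hn.trans hu)
    simp [this, hu.not_gt]
  · have hne : {n | q n ≤ u}.Nonempty :=
      (hlim.eventually (gt_mem_nhds hu)).exists.imp fun _ => le_of_lt
    refine ⟨fun h => ⟨hu, not_le.mp (Nat.notMem_of_lt_sInf h)⟩, fun h => ?_⟩
    by_contra hle
    exact (h.2.trans_le (hq (not_lt.mp hle))).not_ge (Nat.sInf_mem hne)

theorem measurable_quantileIndex (hq : Antitone q) (hpos : ∀ n, 0 < q n)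
    (hlim : Tendsto q atTop (𝓝 0)) : Measurable (quantileIndex q) :=
  measurable_of_Ioi fun N => by
    rw [quantileIndex_preimage_Ioi hq hpos hlim]; exact measurableSet_Ioo

theorem volume_restrict_Ioc_setOf_lt_quantileIndex (hq : Antitone q) (hpos : ∀ n, 0 < q n)
    (hlim : Tendsto q atTop (𝓝 0)) {N : ℕ} (hN : q N ≤ 1) :
    volume.restrict (Ioc 0 1) {u | N < quantileIndex q u} = ENNReal.ofReal (q N) := by
  change volume.restrict _ (quantileIndex q ⁻¹' Ioi N) = _
  rw [quantileIndex_preimage_Ioi hq hpos hlim,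
    Measure.restrict_eq_self _ (Ioo_subset_Ioc_self.trans (Ioc_subset_Ioc_right hN)),
    Real.volume_Ioo, sub_zero]

end QuantileIndex

noncomputable def tower : ℕ → ℝ
  | 0 => 1
  | n + 1 => Real.exp (tower n)

theorem tower_succ (n : ℕ) : tower (n + 1) = Real.exp (tower n) := rfl

theorem log_tower_succ (n : ℕ) : Real.log (tower (n + 1)) = tower n := Real.log_exp _

theorem natCast_add_one_le_tower (n : ℕ) : (n : ℝ) + 1 ≤ tower n := by
  induction n with
  | zero => simp [tower]
  | succ n ih => push_cast; linarith [Real.add_one_le_exp (tower n), tower_succ n]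

theorem one_le_tower (n : ℕ) : 1 ≤ tower n := by
  linarith [natCast_add_one_le_tower n, n.cast_nonneg (α := ℝ)]

theorem tower_pos (n : ℕ) : 0 < tower n := zero_lt_one.trans_le (one_le_tower n)

theorem strictMono_tower : StrictMono tower :=
  strictMono_nat_of_lt_succ fun n => by
    linarith [Real.add_one_le_exp (tower n), tower_succ n]

theorem tendsto_tower_atTop : Tendsto tower atTop atTop :=
  tendsto_atTop_mono natCast_add_one_le_tower <|
    tendsto_atTop_add_const_right _ 1 tendsto_natCast_atTop_atTop

/-- `P(t_e ≥ tower (n + 1))`, chosen so that the minimum of `m` copies is `≥ tower (n + 1)` with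
probability `1 / (2 tower n) = 1 / (2 log tower (n + 1))`. -/
noncomputable def towerTail (m n : ℕ) : ℝ := (2 * tower n) ^ (-(m : ℝ)⁻¹)

section TowerTail

variable (m : ℕ)

theorem towerTail_pos (n : ℕ) : 0 < towerTail m n :=
  Real.rpow_pos_of_pos (mul_pos two_pos (tower_pos n)) _

theorem towerTail_le_one (n : ℕ) : towerTail m n ≤ 1 :=
  Real.rpow_le_one_of_one_le_of_nonpos (by linarith [one_le_tower n])
    (neg_nonpos.mpr (by positivity))

theorem antitone_towerTail : Antitone (towerTail m) := fun _ _ h =>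
  Real.rpow_le_rpow_of_nonpos (mul_pos two_pos (tower_pos _))
    (by linarith [strictMono_tower.monotone h]) (neg_nonpos.mpr (by positivity))

variable {m}

theorem tendsto_towerTail [NeZero m] : Tendsto (towerTail m) atTop (𝓝 0) :=
  (tendsto_rpow_neg_atTop (inv_pos.mpr (Nat.cast_pos.mpr (NeZero.pos m)))).comp <|
    tendsto_tower_atTop.const_mul_atTop two_pos

theorem towerTail_pow [NeZero m] (n : ℕ) : towerTail m n ^ m = (2 * tower n)⁻¹ := by
  rw [towerTail, ← Real.rpow_natCast, ← Real.rpow_mul (by linarith [one_le_tower n]),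
    neg_mul, inv_mul_cancel₀ (Nat.cast_ne_zero.mpr (NeZero.ne m)), Real.rpow_neg_one]

end TowerTail

instance : IsProbabilityMeasure (volume.restrict (Ioc (0 : ℝ) 1)) := ⟨by simp⟩

/-- `t_e` as a quantile transform of a uniform variable on `(0, 1]`. -/
noncomputable def edgeWeight (m : ℕ) (u : ℝ) : ℝ := tower (quantileIndex (towerTail m) u)

section EdgeWeight

variable {m : ℕ} [NeZero m]

theorem measurable_edgeWeight : Measurable (edgeWeight m) :=
  measurable_from_nat.comp <| measurable_quantileIndex (antitone_towerTail m) (towerTail_pos m)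
    tendsto_towerTail

theorem toReal_ofReal_towerTail_pow (n : ℕ) :
    (ENNReal.ofReal (towerTail m n) ^ m).toReal = (2 * tower n)⁻¹ := by
  rw [← ENNReal.ofReal_pow (towerTail_pos m n).le, towerTail_pow,
    ENNReal.toReal_ofReal (inv_pos.mpr (mul_pos two_pos (tower_pos n))).le]

theorem pi_real_tower_succ_le_iInf_edgeWeight (N : ℕ) :
    (Measure.pi fun _ : Fin m => volume.restrict (Ioc (0 : ℝ) 1)).real
      {ω | tower (N + 1) ≤ ⨅ i, edgeWeight m (ω i)} = (2 * tower N)⁻¹ := by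
  rw [measureReal_def, Measure.pi_le_iInf_comp, Fintype.card_fin]
  simp_rw [edgeWeight, strictMono_tower.le_iff_le, Nat.succ_le_iff]
  rw [volume_restrict_Ioc_setOf_lt_quantileIndex (antitone_towerTail m) (towerTail_pos m)
    tendsto_towerTail (towerTail_le_one m N), toReal_ofReal_towerTail_pow]

theorem pi_real_tower_succ_lt_iInf_edgeWeight (N : ℕ) :
    (Measure.pi fun _ : Fin m => volume.restrict (Ioc (0 : ℝ) 1)).real
      {ω | tower (N + 1) < ⨅ i, edgeWeight m (ω i)} = (2 * tower (N + 1))⁻¹ := by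
  rw [measureReal_def, Measure.pi_lt_iInf_comp, Fintype.card_fin]
  simp_rw [edgeWeight, strictMono_tower.lt_iff_lt]
  rw [volume_restrict_Ioc_setOf_lt_quantileIndex (antitone_towerTail m) (towerTail_pos m)
    tendsto_towerTail (towerTail_le_one m (N + 1)), toReal_ofReal_towerTail_pow]

end EdgeWeight

/-- There is a distribution for the edge-weight `t_e` such that, with `Y` the minimum of `2d`
i.i.d. copies of `t_e`, the ratio `E[Y ∧ t] / (t(1 - F_Y(t)) ∨ 1)` is at least `t / (2 log t)`
on an unbounded set of `t`. -/
theorem truncated_mean_ratio_large_io (d : ℕ) (hd : 2 ≤ d) :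
    ∃ (Ω : Type) (_ : MeasurableSpace Ω) (P : Measure Ω) (_ : IsProbabilityMeasure P)
      (X : Fin (2 * d) → Ω → ℝ),
      (∀ i, Measurable (X i)) ∧
      (∀ i ω, 0 ≤ X i ω) ∧
      iIndepFun X P ∧
      (∀ i j, Measure.map (X i) P = Measure.map (X j) P) ∧
      ∀ T : ℝ, ∃ t : ℝ, T < t ∧ 0 < t ∧
        t / (2 * Real.log t)
          ≤ (∫ ω, min (⨅ i, X i ω) t ∂P) /
              max (t * (1 - (P {ω | (⨅ i, X i ω) ≤ t}).toReal)) 1 := by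
  have : NeZero (2 * d) := ⟨by omega⟩
  set P := Measure.pi fun _ : Fin (2 * d) => volume.restrict (Ioc (0 : ℝ) 1)
  have hX := measurable_edgeWeight (m := 2 * d)
  refine ⟨Fin (2 * d) → ℝ, inferInstance, P, inferInstance, fun i ω => edgeWeight (2 * d) (ω i),
    fun i => hX.comp (measurable_pi_apply i), fun i ω => (tower_pos _).le,
    iIndepFun_pi fun _ => hX.aemeasurable,
    fun i j => by rw [Measure.map_pi_comp_eval hX, Measure.map_pi_comp_eval hX], fun T => ?_⟩
  obtain ⟨N, hN⟩ :=
    ((tendsto_tower_atTop.comp (tendsto_add_atTop_nat 1)).eventually_gt_atTop T).exists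
  set t := tower (N + 1)
  have ht : 0 < t := tower_pos (N + 1)
  refine ⟨t, hN, ht, ?_⟩
  have hY : Measurable fun ω : Fin (2 * d) → ℝ => ⨅ i, edgeWeight (2 * d) (ω i) :=
    .iInf fun i => hX.comp (measurable_pi_apply i)
  have hmean : t / (2 * Real.log t) ≤ ∫ ω, min (⨅ i, edgeWeight (2 * d) (ω i)) t ∂P := by
    calc t / (2 * Real.log t) = t * P.real {ω | t ≤ ⨅ i, edgeWeight (2 * d) (ω i)} := by
          rw [pi_real_tower_succ_le_iInf_edgeWeight, log_tower_succ, div_eq_mul_inv]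
      _ ≤ _ :=
        mul_measureReal_le_integral_min hY (fun ω => le_ciInf fun i => (tower_pos _).le) ht.le
  have hdev : t * (1 - P.real {ω | (⨅ i, edgeWeight (2 * d) (ω i)) ≤ t}) ≤ 1 := by
    calc t * (1 - P.real {ω | (⨅ i, edgeWeight (2 * d) (ω i)) ≤ t})
        = t * P.real {ω | t < ⨅ i, edgeWeight (2 * d) (ω i)} := by
          rw [← probReal_compl_eq_one_sub (measurableSet_le hY measurable_const), compl_ofPred]
          simp only [not_le]
      _ = 1 / 2 := by
          rw [pi_real_tower_succ_lt_iInf_edgeWeight]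
          field_simp
          exact div_self ht.ne'
      _ ≤ 1 := by norm_num
  rwa [← measureReal_def, max_eq_right hdev, div_one]
end

section
/- Let Y be a nonnegative real random variable with distribution function F_Y. Then there exists a constant C > 0 such that for infinitely many positive integers n, E[Y ∧ 2^n] / (max{2^n (1 − F_Y(2^n)), 1}) ≤ C log(2^n). -/
/-!
Write `a n = E[Y ∧ 2^n]` and `D n = 2^n (1 - F_Y(2^n)) ∨ 1`. Since
`Y ∧ 2^{n+1} ≤ Y ∧ 2^n + 2^n 1_{Y > 2^n}`, the truncated means satisfy `a (n+1) ≤ a n + D n`.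
If `a n > 3 n D n` held for all large `n`, this would give `a (n+1) ≤ a n (1 + 1/(3n))`,
hence `a n = O(√n)`, contradicting `a n > 3 n D n ≥ 3 n`.
With `C = 3 / log 2` the bound `3 n D n` is exactly `C log(2^n) D n`.
-/

open MeasureTheory ProbabilityTheory Filter Set

lemma sqrt_mul_one_add_inv_le_sqrt_add_one {x : ℝ} (hx : 1 / 3 ≤ x) :
    √x * (1 + 1 / (3 * x)) ≤ √(x + 1) := by
  have hx0 : 0 < x := by linarith
  rw [← Real.sqrt_sq (by positivity : 0 ≤ √x * (1 + 1 / (3 * x)))]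
  refine Real.sqrt_le_sqrt ?_
  rw [mul_pow, Real.sq_sqrt hx0.le]
  field_simp
  nlinarith

lemma le_mul_sqrt_of_le_mul_one_add {a : ℕ → ℝ} {n₀ : ℕ} (hn₀ : 0 < n₀) (ha : 0 ≤ a n₀)
    (hstep : ∀ n ≥ n₀, a (n + 1) ≤ a n * (1 + 1 / (3 * n))) :
    ∀ m ≥ n₀, a m ≤ a n₀ / √n₀ * √m := by
  have hK : 0 ≤ a n₀ / √n₀ := by positivity
  intro m hm
  induction m, hm using Nat.le_induction with
  | base => rw [div_mul_cancel₀ _ (by positivity)]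
  | succ m hm ih =>
    have hm1 : (1 : ℝ) ≤ m := by exact_mod_cast hn₀.trans_le hm
    calc a (m + 1) ≤ a m * (1 + 1 / (3 * m)) := hstep m hm
      _ ≤ a n₀ / √n₀ * √m * (1 + 1 / (3 * m)) := by gcongr
      _ = a n₀ / √n₀ * (√m * (1 + 1 / (3 * m))) := mul_assoc _ _ _
      _ ≤ a n₀ / √n₀ * √(m + 1 : ℕ) := by
        push_cast
        gcongr
        exact sqrt_mul_one_add_inv_le_sqrt_add_one (by linarith)

lemma frequently_le_mul_of_le_add {a D : ℕ → ℝ} (hD : ∀ n, 1 ≤ D n)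
    (hstep : ∀ n, a (n + 1) ≤ a n + D n) : ∃ᶠ n in atTop, a n ≤ 3 * n * D n := by
  by_contra h
  obtain ⟨n₀, hn₀⟩ := eventually_atTop.1 ((not_frequently.1 h).mono fun _ => lt_of_not_ge)
  have hbig : ∀ n ≥ n₀ + 1, 3 * n * D n < a n := fun n hn => hn₀ n (by omega)
  have hpos : ∀ n ≥ n₀ + 1, (0 : ℝ) < n := fun n hn => by exact_mod_cast (by omega : 0 < n)
  have ha₀ : 0 ≤ a (n₀ + 1) := by nlinarith [hD (n₀ + 1), hpos _ le_rfl, hbig _ le_rfl]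
  have hratio : ∀ n ≥ n₀ + 1, a (n + 1) ≤ a n * (1 + 1 / (3 * n)) := fun n hn => by
    have h3n : 0 < 3 * (n : ℝ) := by linarith [hpos n hn]
    have hDn : D n ≤ a n / (3 * n) := by
      rw [le_div_iff₀ h3n, mul_comm]; exact (hbig n hn).le
    calc a (n + 1) ≤ a n + a n / (3 * n) := (hstep n).trans (by linarith)
      _ = a n * (1 + 1 / (3 * n)) := by field_simp
  have hgrowth := le_mul_sqrt_of_le_mul_one_add (Nat.succ_pos n₀) ha₀ hratio
  set K := a (n₀ + 1) / √(n₀ + 1 : ℕ)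
  set m := n₀ + 1 + ⌈K ^ 2⌉₊
  have hm : m ≥ n₀ + 1 := by omega
  have hsqrt : K < √m := Real.lt_sqrt_of_sq_lt <|
    (Nat.le_ceil _).trans_lt (by exact_mod_cast (by omega : ⌈K ^ 2⌉₊ < m))
  have hmpos := hpos m hm
  have hlt : K * √m < 3 * m * D m := calc
    K * √m < √m * √m := by gcongr
    _ = m := Real.mul_self_sqrt hmpos.le
    _ ≤ 3 * m * D m := by nlinarith [hD m]
  linarith [hgrowth m hm, hbig m hm]

lemma integrable_min_const {Ω : Type*} [MeasurableSpace Ω] {P : Measure Ω} [IsFiniteMeasure P]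
    {Y : Ω → ℝ} (hY : AEMeasurable Y P) (hY0 : ∀ ω, 0 ≤ Y ω) {c : ℝ} (hc : 0 ≤ c) :
    Integrable (fun ω => min (Y ω) c) P := by
  refine (integrable_const c).mono' (hY.min aemeasurable_const).aestronglyMeasurable ?_
  filter_upwards with ω
  rw [Real.norm_eq_abs, abs_of_nonneg (le_min (hY0 ω) hc)]
  exact min_le_right _ _

lemma integral_min_two_mul_le {Ω : Type*} [MeasurableSpace Ω] {P : Measure Ω}
    [IsProbabilityMeasure P] {Y : Ω → ℝ} (hY : Measurable Y) (hY0 : ∀ ω, 0 ≤ Y ω) {t : ℝ}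
    (ht : 0 ≤ t) :
    ∫ ω, min (Y ω) (2 * t) ∂P ≤
      ∫ ω, min (Y ω) t ∂P + t * (1 - (P {ω | Y ω ≤ t}).toReal) := by
  have hs : MeasurableSet {ω | Y ω ≤ t} := measurableSet_le hY measurable_const
  have hind : Integrable ({ω | Y ω ≤ t}ᶜ.indicator fun _ => t) P :=
    (integrable_const t).indicator hs.compl
  have hpoint : ∀ ω, min (Y ω) (2 * t) ≤
      min (Y ω) t + {ω | Y ω ≤ t}ᶜ.indicator (fun _ => t) ω := fun ω => by
    by_cases h : Y ω ≤ t
    · simp [h, min_eq_left (h.trans (by linarith : t ≤ 2 * t))]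
    · rw [indicator_of_mem (by exact h), min_eq_right (not_le.1 h).le]
      linarith [min_le_right (Y ω) (2 * t)]
  calc ∫ ω, min (Y ω) (2 * t) ∂P
      ≤ ∫ ω, min (Y ω) t + {ω | Y ω ≤ t}ᶜ.indicator (fun _ => t) ω ∂P :=
        integral_mono (integrable_min_const hY.aemeasurable hY0 (by linarith))
          ((integrable_min_const hY.aemeasurable hY0 ht).add hind) hpoint
    _ = ∫ ω, min (Y ω) t ∂P + t * (1 - (P {ω | Y ω ≤ t}).toReal) := by
        rw [integral_add (integrable_min_const hY.aemeasurable hY0 ht) hind,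
          integral_indicator_const _ hs.compl, probReal_compl_eq_one_sub hs, smul_eq_mul,
          mul_comm, measureReal_def]

/-- For any nonnegative random variable `Y`, there is `C > 0` such that for infinitely many `n`,
`E[Y ∧ 2^n] / (2^n(1 - F_Y(2^n)) ∨ 1) ≤ C log(2^n)`. -/
theorem truncated_mean_ratio_small_io {Ω : Type} [MeasurableSpace Ω]
    (P : Measure Ω) [IsProbabilityMeasure P] (Y : Ω → ℝ)
    (hY : Measurable Y) (hY0 : ∀ ω, 0 ≤ Y ω) :
    ∃ C : ℝ, 0 < C ∧ ∀ N : ℕ, ∃ n : ℕ, N ≤ n ∧ 1 ≤ n ∧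
      (∫ ω, min (Y ω) ((2 : ℝ) ^ n) ∂P) /
          max ((2 : ℝ) ^ n * (1 - (P {ω | Y ω ≤ (2 : ℝ) ^ n}).toReal)) 1
        ≤ C * Real.log ((2 : ℝ) ^ n) := by
  set D : ℕ → ℝ := fun n => max ((2 : ℝ) ^ n * (1 - (P {ω | Y ω ≤ (2 : ℝ) ^ n}).toReal)) 1
  have hD : ∀ n, 1 ≤ D n := fun n => le_max_right _ _
  have hstep : ∀ n, ∫ ω, min (Y ω) ((2 : ℝ) ^ (n + 1)) ∂P ≤
      ∫ ω, min (Y ω) ((2 : ℝ) ^ n) ∂P + D n := fun n => by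
    rw [pow_succ']
    exact (integral_min_two_mul_le hY hY0 (by positivity)).trans
      (add_le_add le_rfl (le_max_left _ _))
  refine ⟨3 / Real.log 2, by positivity, fun N => ?_⟩
  obtain ⟨n, hn, hle⟩ := frequently_atTop.1
    (frequently_le_mul_of_le_add (a := fun n => ∫ ω, min (Y ω) ((2 : ℝ) ^ n) ∂P) hD hstep)
    (max N 1)
  refine ⟨n, le_of_max_le_left hn, le_of_max_le_right hn, ?_⟩
  have hC : 3 / Real.log 2 * (n * Real.log 2) = 3 * n := by
    field_simp [(Real.log_pos one_lt_two).ne']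
  rwa [div_le_iff₀ (one_pos.trans_le (hD n)), Real.log_pow, hC]
end

section
/- (Regularity lemma) Let d ≥ 1 and let C, s_0 > 0 be constants. Let φ, ψ : [0,∞) → [0,∞) be Lebesgue measurable functions such that (1) ∫_0^t φ(s) ds ≤ C t^d ψ(t) for all t > s_0, and (2) ψ is nondecreasing with 0 < ψ(2t) ≤ 2ψ(t) for all t > 0. Then for every t > 0 and every a > 0, Leb({s ∈ [0,t] : φ(s) ≥ a s^{d−1} ψ(s)}) / t ≤ 2s_0/t + 2^{d+1} C / a. -/
open MeasureTheory Set

/-- Regularity lemma (Lemma 3.1): a Markov-type inequality for functions on the real line. -/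
theorem regularity_lemma (d : ℕ) (hd : 1 ≤ d) (C s₀ : ℝ) (hC : 0 < C) (hs₀ : 0 < s₀)
    (φ ψ : ℝ → ℝ) (hφmeas : Measurable φ) (hψmeas : Measurable ψ)
    (hφ0 : ∀ s, 0 ≤ s → 0 ≤ φ s) (hψ0 : ∀ s, 0 ≤ s → 0 ≤ ψ s)
    (h1 : ∀ t : ℝ, s₀ < t →
      (∫⁻ s in Set.Icc (0 : ℝ) t, ENNReal.ofReal (φ s))
        ≤ ENNReal.ofReal (C * t ^ d * ψ t))
    (h2mono : ∀ s u : ℝ, 0 ≤ s → s ≤ u → ψ s ≤ ψ u)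
    (h2doub : ∀ s : ℝ, 0 < s → 0 < ψ (2 * s) ∧ ψ (2 * s) ≤ 2 * ψ s) :
    ∀ t : ℝ, 0 < t → ∀ a : ℝ, 0 < a →
      (volume {s : ℝ | s ∈ Set.Icc 0 t ∧ a * s ^ (d - 1) * ψ s ≤ φ s}).toReal / t
        ≤ 2 * s₀ / t + 2 ^ (d + 1) * C / a := by
  intro t ht a ha
  set E : ℝ → Set ℝ := fun u => {s : ℝ | s ∈ Set.Icc 0 u ∧ a * s ^ (d - 1) * ψ s ≤ φ s}
    with hE
  have hEsub : ∀ u : ℝ, E u ⊆ Set.Icc 0 u := fun u s hs => hs.1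
  have hEfin : ∀ u : ℝ, volume (E u) ≠ ⊤ := fun u =>
    ((measure_mono (hEsub u)).trans_lt measure_Icc_lt_top).ne
  -- key dyadic estimate
  have key : ∀ u : ℝ, 2 * s₀ < u →
      (volume (E u ∩ Set.Icc (u / 2) u)).toReal ≤ 2 ^ d * C * u / a := by
    intro u hu
    have hu0 : 0 < u := lt_trans (by linarith) hu
    have hu2 : (0 : ℝ) < u / 2 := by linarith
    have hψhalf : 0 < ψ (u / 2) := by
      have := (h2doub (u / 4) (by linarith)).1
      have : (0:ℝ) < ψ (2 * (u / 4)) := this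
      have h4 : 2 * (u / 4) = u / 2 := by ring
      rwa [h4] at this
    have hψdoub : ψ u ≤ 2 * ψ (u / 2) := by
      have := (h2doub (u / 2) hu2).2
      have h2 : 2 * (u / 2) = u := by ring
      rwa [h2] at this
    set b : ℝ := a * (u / 2) ^ (d - 1) * ψ (u / 2) with hb
    have hbpos : 0 < b := by positivity
    set S : Set ℝ := E u ∩ Set.Icc (u / 2) u with hS
    have hSsub : S ⊆ Set.Icc 0 u := fun s hs => (hEsub u) hs.1
    have hSfin : volume S ≠ ⊤ := ((measure_mono hSsub).trans_lt measure_Icc_lt_top).ne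
    have hlow : ∀ s ∈ S, b ≤ φ s := by
      intro s hs
      obtain ⟨⟨hs01, hsle⟩, hs2, hs2'⟩ := hs
      have hs0 : (0:ℝ) ≤ s := hs01.1
      have h1' : (u / 2) ^ (d - 1) ≤ s ^ (d - 1) := pow_le_pow_left₀ (le_of_lt hu2) hs2 _
      have h2' : ψ (u / 2) ≤ ψ s := h2mono _ _ (le_of_lt hu2) hs2
      calc b ≤ a * s ^ (d - 1) * ψ s := by
              apply mul_le_mul
              · exact mul_le_mul_of_nonneg_left h1' (le_of_lt ha)
              · exact h2'
              · exact le_of_lt hψhalf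
              · positivity
        _ ≤ φ s := hsle
    have hint : ENNReal.ofReal b * volume S ≤ ENNReal.ofReal (C * u ^ d * ψ u) := by
      calc ENNReal.ofReal b * volume S = ∫⁻ s in S, ENNReal.ofReal b := by
            rw [setLIntegral_const]
        _ ≤ ∫⁻ s in S, ENNReal.ofReal (φ s) :=
            setLIntegral_mono (hφmeas.ennreal_ofReal) (fun s hs =>
              ENNReal.ofReal_le_ofReal (hlow s hs))
        _ ≤ ∫⁻ s in Set.Icc (0:ℝ) u, ENNReal.ofReal (φ s) :=
            lintegral_mono_set hSsub
        _ ≤ ENNReal.ofReal (C * u ^ d * ψ u) := h1 u (by linarith)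
    have hreal : b * (volume S).toReal ≤ C * u ^ d * ψ u := by
      have hrhs : (0:ℝ) ≤ C * u ^ d * ψ u := by
        have := hψ0 u (le_of_lt hu0); positivity
      have := ENNReal.toReal_mono (by simp) hint
      rwa [ENNReal.toReal_mul, ENNReal.toReal_ofReal (le_of_lt hbpos),
        ENNReal.toReal_ofReal hrhs] at this
    -- now pure real arithmetic
    have hm0 : (0:ℝ) ≤ (volume S).toReal := ENNReal.toReal_nonneg
    set m : ℝ := (volume S).toReal
    have hud : u ^ d = u ^ (d - 1) * u := by
      conv_lhs => rw [← Nat.sub_add_cancel hd]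
      rw [pow_succ]
    have hhalfpow : (u / 2) ^ (d - 1) = u ^ (d - 1) / 2 ^ (d - 1) := div_pow u 2 (d - 1)
    have hupow : (0:ℝ) < u ^ (d - 1) := pow_pos hu0 _
    have h2pow : (0:ℝ) < (2:ℝ) ^ (d - 1) := by positivity
    -- b * m ≤ C u^d ψ u ≤ C u^{d-1} u 2 ψ(u/2)
    have step1 : b * m ≤ 2 * C * u ^ (d - 1) * u * ψ (u / 2) := by
      calc b * m ≤ C * u ^ d * ψ u := hreal
        _ ≤ C * u ^ d * (2 * ψ (u / 2)) := by
            apply mul_le_mul_of_nonneg_left hψdoub (by positivity)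
        _ = 2 * C * u ^ (d - 1) * u * ψ (u / 2) := by rw [hud]; ring
    have hbm : b * m = a * (u ^ (d - 1) / 2 ^ (d - 1)) * ψ (u / 2) * m := by
      rw [hb, hhalfpow]
    have step2 : m ≤ 2 ^ d * C * u / a := by
      rw [hbm] at step1
      rw [le_div_iff₀ ha]
      have h2d : (2:ℝ) ^ d = 2 ^ (d - 1) * 2 := by
        conv_lhs => rw [← Nat.sub_add_cancel hd]
        rw [pow_succ]
      have key2 : a * m * u ^ (d - 1) ≤ 2 ^ d * C * u * u ^ (d - 1) := by
        have h1 : a * (u ^ (d - 1) / 2 ^ (d - 1)) * ψ (u / 2) * m * 2 ^ (d - 1)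
            ≤ 2 * C * u ^ (d - 1) * u * ψ (u / 2) * 2 ^ (d - 1) :=
          mul_le_mul_of_nonneg_right step1 (le_of_lt h2pow)
        have heq : a * (u ^ (d - 1) / 2 ^ (d - 1)) * ψ (u / 2) * m * 2 ^ (d - 1)
            = a * m * u ^ (d - 1) * ψ (u / 2) := by field_simp
        have heq2 : 2 * C * u ^ (d - 1) * u * ψ (u / 2) * 2 ^ (d - 1)
            = 2 ^ d * C * u * u ^ (d - 1) * ψ (u / 2) := by rw [h2d]; ring
        rw [heq, heq2] at h1
        exact le_of_mul_le_mul_right h1 hψhalf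
      have := le_of_mul_le_mul_right key2 hupow
      calc m * a = a * m := by ring
        _ ≤ 2 ^ d * C * u := this
    exact step2
  -- induction on dyadic scales
  have main : ∀ n : ℕ, ∀ u : ℝ, 0 < u → u ≤ 2 * s₀ * 2 ^ n →
      (volume (E u)).toReal ≤ 2 * s₀ + 2 ^ (d + 1) * C * u / a := by
    intro n
    induction n with
    | zero =>
        intro u hu0 hule
        have h1' : (volume (E u)).toReal ≤ u := by
          have : volume (E u) ≤ volume (Set.Icc 0 u) := measure_mono (hEsub u)
          have h2' := ENNReal.toReal_mono measure_Icc_lt_top.ne this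
          rwa [Real.volume_Icc, ENNReal.toReal_ofReal (by linarith), sub_zero] at h2'
        have : (0:ℝ) ≤ 2 ^ (d + 1) * C * u / a := by positivity
        simp only [pow_zero, mul_one] at hule
        linarith
    | succ n ih =>
        intro u hu0 hule
        by_cases hcase : u ≤ 2 * s₀
        · have h1' : (volume (E u)).toReal ≤ u := by
            have : volume (E u) ≤ volume (Set.Icc 0 u) := measure_mono (hEsub u)
            have h2' := ENNReal.toReal_mono measure_Icc_lt_top.ne this
            rwa [Real.volume_Icc, ENNReal.toReal_ofReal (by linarith), sub_zero] at h2'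
          have : (0:ℝ) ≤ 2 ^ (d + 1) * C * u / a := by positivity
          linarith
        · push_neg at hcase
          have hsplit : E u ⊆ E (u / 2) ∪ (E u ∩ Set.Icc (u / 2) u) := by
            intro s hs
            obtain ⟨⟨hs0, hsu⟩, hcond⟩ := hs
            by_cases h : s ≤ u / 2
            · exact Or.inl ⟨⟨hs0, h⟩, hcond⟩
            · exact Or.inr ⟨⟨⟨hs0, hsu⟩, hcond⟩, le_of_not_ge h, hsu⟩
          have hSfin : volume (E u ∩ Set.Icc (u / 2) u) ≠ ⊤ :=
            ((measure_mono (Set.inter_subset_left)).trans_lt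
              (lt_top_iff_ne_top.mpr (hEfin u))).ne
          have hsum : (volume (E u)).toReal ≤
              (volume (E (u / 2))).toReal + (volume (E u ∩ Set.Icc (u / 2) u)).toReal := by
            have h1' := (measure_mono (μ := volume) hsplit).trans (measure_union_le _ _)
            have := ENNReal.toReal_mono
              (by exact ENNReal.add_ne_top.mpr ⟨hEfin _, hSfin⟩) h1'
            rwa [ENNReal.toReal_add (hEfin _) hSfin] at this
          have hih := ih (u / 2) (by linarith)
            (by rw [pow_succ] at hule; linarith)
          have hkey := key u hcase
          have hpow : (2:ℝ) ^ (d + 1) = 2 ^ d * 2 := pow_succ 2 d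
          have : (volume (E u)).toReal ≤
              2 * s₀ + 2 ^ (d + 1) * C * (u / 2) / a + 2 ^ d * C * u / a := by
            linarith
          have heq : 2 ^ (d + 1) * C * (u / 2) / a + 2 ^ d * C * u / a
              = 2 ^ (d + 1) * C * u / a := by
            rw [hpow]; field_simp; ring
          linarith
  obtain ⟨n, hn⟩ := pow_unbounded_of_one_lt (t / (2 * s₀)) (one_lt_two (α := ℝ))
  have htle : t ≤ 2 * s₀ * 2 ^ n := by
    rw [div_lt_iff₀ (by linarith)] at hn
    nlinarith
  have hmain := main n t ht htle
  rw [div_le_iff₀ ht] at *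
  calc (volume (E t)).toReal ≤ 2 * s₀ + 2 ^ (d + 1) * C * t / a := hmain
    _ = (2 * s₀ / t + 2 ^ (d + 1) * C / a) * t := by field_simp
end

section
/- (Shielding lemma) Fix d ≥ 2, let (t_e)_{e∈E^d} be i.i.d. nonnegative real random variables, and fix M > 0; declare an edge e open if t_e ≤ M. Let Λ be a finite subset of e_1 + 3Z^d (where e_1 is the first coordinate vector), and define the random set V_Λ to be the set of v ∈ Λ such that (A) v − e_1 belongs to an infinite open cluster, and (B) every nearest-neighbor edge joining two vertices of {z ∈ Z^d : ‖z − v‖_∞ = 1} is open. For a finite set V ⊆ Λ and a threshold r > 0, let N_{V,r} be the number of v ∈ V such that every edge incident to v has weight > r. Then for every such V and r, the random variable N_{V,r} and the event {V_Λ = V} are independent. -/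
open MeasureTheory ProbabilityTheory Filter Set
open scoped ENNReal NNReal

namespace FPPBoundary

/-- Vertices of `ℤ^d`. -/
abbrev V (d : ℕ) := Fin d → ℤ

/-- Nearest-neighbor adjacency in `ℤ^d`. -/
def adj {d : ℕ} (x y : V d) : Prop := (∑ i, |x i - y i|) = 1

/-- `e` is a nearest-neighbor edge of `ℤ^d`. -/
def IsEdge {d : ℕ} (e : Sym2 (V d)) : Prop := ∃ x y : V d, adj x y ∧ e = s(x, y)

/-- The set of nearest-neighbor edges, as a type. -/
abbrev Edge (d : ℕ) := {e : Sym2 (V d) // IsEdge e}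

/-- `γ : Fin (n+1) → V d` is a lattice path from `x` to `y`. -/
def IsPathFrom {d : ℕ} (n : ℕ) (γ : Fin (n + 1) → V d) (x y : V d) : Prop :=
  γ 0 = x ∧ γ (Fin.last n) = y ∧ ∀ i : Fin n, adj (γ i.castSucc) (γ i.succ)

/-- The passage time of a lattice path. -/
noncomputable def pathCost {d : ℕ} (wgt : Sym2 (V d) → ℝ) (n : ℕ)
    (γ : Fin (n + 1) → V d) : ℝ :=
  ∑ i : Fin n, wgt s(γ i.castSucc, γ i.succ)

/-- The first-passage time `T(x,y)`. -/
noncomputable def T {d : ℕ} (wgt : Sym2 (V d) → ℝ) (x y : V d) : ℝ :=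
  sInf {c : ℝ | ∃ n γ, IsPathFrom n γ x y ∧ c = pathCost wgt n γ}

/-- The lattice point `[x]` with `x ∈ [x] + [0,1)^d`. -/
noncomputable def latt {d : ℕ} (x : Fin d → ℝ) : V d := fun i => ⌊x i⌋

/-- The extension of `T` to `ℝ^d × ℝ^d`. -/
noncomputable def Treal {d : ℕ} (wgt : Sym2 (V d) → ℝ) (x y : Fin d → ℝ) : ℝ :=
  T wgt (latt x) (latt y)

/-- The ball `B(t)`. -/
noncomputable def ball {d : ℕ} (wgt : Sym2 (V d) → ℝ) (t : ℝ) : Set (V d) :=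
  {x | T wgt 0 x ≤ t}

/-- The edge boundary `∂ₑ A`. -/
def edgeBoundary {d : ℕ} (A : Set (V d)) : Set (Sym2 (V d)) :=
  {e | ∃ x y : V d, adj x y ∧ x ∈ A ∧ y ∉ A ∧ e = s(x, y)}

/-- The vertex exterior boundary `∂^ext A`. -/
def extVertexBoundary {d : ℕ} (A : Set (V d)) : Set (V d) :=
  {x | x ∉ A ∧ (∃ y ∈ A, adj x y) ∧
    ∃ γ : ℕ → V d, γ 0 = x ∧ Function.Injective γ ∧
      (∀ n, adj (γ n) (γ (n + 1))) ∧ ∀ n, γ n ∉ A}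

/-- The edge exterior boundary `∂ₑ^ext A`. -/
def extEdgeBoundary {d : ℕ} (A : Set (V d)) : Set (Sym2 (V d)) :=
  {e | ∃ x y : V d, adj x y ∧ y ∈ A ∧ x ∈ extVertexBoundary A ∧ e = s(x, y)}

/-- `x` and `y` are joined by a lattice path all of whose edges lie in `O`. -/
def ConnectedIn {d : ℕ} (O : Set (Sym2 (V d))) (x y : V d) : Prop :=
  ∃ n γ, IsPathFrom n γ x y ∧ ∀ i : Fin n, s(γ (Fin.castSucc i), γ i.succ) ∈ O

/-- The open cluster of `x` for the set `O` of open edges. -/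
def cluster {d : ℕ} (O : Set (Sym2 (V d))) (x : V d) : Set (V d) := {y | ConnectedIn O x y}

/-- `c` is an i.i.d. Bernoulli(p) bond configuration under `P`. -/
def IsBernoulliPerc {d : ℕ} {Ω : Type} [MeasurableSpace Ω] (P : Measure Ω) (p : ℝ)
    (c : Ω → Sym2 (V d) → Bool) : Prop :=
  (∀ e : Edge d, Measurable fun ω => c ω e.1) ∧
  iIndepFun (fun (e : Edge d) ω => c ω e.1) P ∧
  ∀ e : Edge d, P {ω | c ω e.1 = true} = ENNReal.ofReal p

/-- The critical probability of Bernoulli bond percolation on `ℤ^d`. -/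
noncomputable def pc (d : ℕ) : ℝ :=
  sSup {p : ℝ | 0 ≤ p ∧ p ≤ 1 ∧
    ∀ (Ω : Type) (_ : MeasurableSpace Ω) (P : Measure Ω), IsProbabilityMeasure P →
      ∀ c : Ω → Sym2 (V d) → Bool, IsBernoulliPerc P p c →
        P {ω | (cluster {e | c ω e = true} 0).Infinite} = 0}

/-- `w` is an i.i.d. family of nonnegative edge-weights with marginal distribution `μ`. -/
def IsIIDWeights {d : ℕ} {Ω : Type} [MeasurableSpace Ω] (P : Measure Ω) (μ : Measure ℝ)
    (w : Ω → Sym2 (V d) → ℝ) : Prop :=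
  (∀ e : Edge d, Measurable fun ω => w ω e.1) ∧
  iIndepFun (fun (e : Edge d) ω => w ω e.1) P ∧
  (∀ e : Edge d, Measure.map (fun ω => w ω e.1) P = μ) ∧
  ∀ (ω) (e : Edge d), 0 ≤ w ω e.1

/-- `Y`: the minimum of the weights of the `2d` edges incident to the origin. -/
noncomputable def Ymin {d : ℕ} (wgt : Sym2 (V d) → ℝ) : ℝ :=
  ⨅ z : {z : V d // adj 0 z}, wgt s(0, z.1)

/-- `E[Y ∧ s]`. -/
noncomputable def EYmin {d : ℕ} {Ω : Type} [MeasurableSpace Ω] (P : Measure Ω)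
    (w : Ω → Sym2 (V d) → ℝ) (s : ℝ) : ℝ :=
  ∫ ω, min (Ymin (w ω)) s ∂P

/-- the distribution function `F_Y` of `Y`. -/
noncomputable def FY {d : ℕ} {Ω : Type} [MeasurableSpace Ω] (P : Measure Ω)
    (w : Ω → Sym2 (V d) → ℝ) (s : ℝ) : ℝ :=
  (P {ω | Ymin (w ω) ≤ s}).toReal

/-- the first coordinate vector. -/
def e1 (d : ℕ) : V d := fun j => if (j : ℕ) = 0 then 1 else 0

/-- `ℓ^∞` norm of a lattice point, as a real number. -/
def linf {d : ℕ} (x : V d) : ℝ := ((Finset.univ.sup fun i => (x i).natAbs : ℕ) : ℝ)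

/-- `ℓ^2` norm on `ℝ^d`. -/
noncomputable def l2 {d : ℕ} (x : Fin d → ℝ) : ℝ := Real.sqrt (∑ i, x i ^ 2)

end FPPBoundary
namespace FPPBoundary

/-- The set `V_Λ` appearing in the shielding lemma: vertices `v ∈ Λ` such that `v - e₁` lies in
an infinite open cluster and all nearest-neighbor edges between vertices of the `ℓ^∞`-sphere of
radius `1` around `v` are open. -/
def shieldSet {d : ℕ} (M : ℝ) (wgt : Sym2 (V d) → ℝ) (Λ : Finset (V d)) : Set (V d) :=
  {v ∈ (Λ : Set (V d)) |
    (cluster {e | wgt e ≤ M} (v - e1 d)).Infinite ∧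
    ∀ y z : V d, (Finset.univ.sup fun j => ((y - v) j).natAbs) = 1 →
      (Finset.univ.sup fun j => ((z - v) j).natAbs) = 1 → adj y z → wgt s(y, z) ≤ M}

end FPPBoundary

/-!
The count `N_{V,r}` is a function of the weights of the edges incident to `V`, so it suffices to
show that the event `{V_Λ = V}` is a function of the weights of the other edges: independence then
comes from the independence of disjoint families of i.i.d. weights. On that event every `u ∈ V` is
surrounded by its `ℓ^∞` unit sphere, all of whose edges are open; since distinct points of
`e₁ + 3ℤ^d` are at `ℓ^∞` distance at least `3`, these spheres and the points `v - e₁` avoid `V`.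
For `d ≥ 2` the unit sphere is connected, so an open path through `u ∈ V` can be rerouted along
it, and whether `v - e₁` lies in an infinite open cluster does not see the edges at `V`.
-/

open Function Relation

theorem Set.infinite_iff_forall_finset {α : Type*} {s : Set α} :
    s.Infinite ↔ ∀ F : Finset α, ∃ a, a ∉ F ∧ a ∈ s :=
  ⟨fun hs F => (hs.exists_notMem_finset F).imp fun _ h => ⟨h.2, h.1⟩,
    fun h hs => (h hs.toFinset).elim fun _ ha => ha.1 (hs.mem_toFinset.2 ha.2)⟩

theorem Finset.measurable_ncard_filter {α ι : Type*} [MeasurableSpace α] (s : Finset ι)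
    {p : ι → α → Prop} (hp : ∀ i, Measurable (p i)) :
    Measurable fun a => {i ∈ (s : Set ι) | p i a}.ncard := by
  classical
  have h : ∀ a, {i ∈ (s : Set ι) | p i a}.ncard = ∑ i ∈ s, if p i a then 1 else 0 := fun a => by
    rw [← Finset.card_filter, ← Set.ncard_coe_finset, Finset.coe_filter]; rfl
  simp_rw [h]
  exact Finset.measurable_sum _ fun i _ =>
    Measurable.ite (hp i).setOf measurable_const measurable_const

theorem Measurable.comp_of_dependsOn {Ω κ β γ : Type*} [MeasurableSpace β]
    [MeasurableSpace γ] [Nonempty β] {mΩ : MeasurableSpace Ω} {X : Ω → κ → β} {T : Set κ}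
    {f : (κ → β) → γ}
    (hf : Measurable f) (hdep : DependsOn f T) (hX : ∀ i ∈ T, Measurable fun ω => X ω i) :
    Measurable fun ω => f (X ω) := by
  classical
  obtain ⟨b⟩ := ‹Nonempty β›
  have hR : Measurable fun ω => T.piecewise (X ω) fun _ => b := by
    refine measurable_pi_lambda _ fun i => ?_
    by_cases hi : i ∈ T
    · simpa only [Set.piecewise_eq_of_mem _ _ _ hi] using hX i hi
    · simpa only [Set.piecewise_eq_of_notMem _ _ _ hi] using measurable_const
  convert hf.comp hR using 1
  exact funext fun ω => hdep fun i hi => (Set.piecewise_eq_of_mem _ _ _ hi).symm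

namespace FPPBoundary

section Lattice
variable {d : ℕ}

theorem adj_comm {x y : V d} : adj x y ↔ adj y x := by
  simp only [adj, abs_sub_comm]

def openAdj (O : Set (Sym2 (V d))) (a b : V d) : Prop := adj a b ∧ s(a, b) ∈ O

theorem connectedIn_iff_reflTransGen {O : Set (Sym2 (V d))} {x y : V d} :
    ConnectedIn O x y ↔ ReflTransGen (openAdj O) x y := by
  constructor
  · rintro ⟨n, γ, ⟨rfl, rfl, hadj⟩, hO⟩
    suffices ∀ i : Fin (n + 1), ReflTransGen (openAdj O) (γ 0) (γ i) from this _
    intro i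
    induction i using Fin.induction with
    | zero => exact .refl
    | succ i ih => exact ih.tail ⟨hadj i, hO i⟩
  · intro h
    induction h with
    | refl => exact ⟨0, fun _ => x, ⟨rfl, rfl, fun i => i.elim0⟩, fun i => i.elim0⟩
    | @tail b c _ hbc ih =>
      obtain ⟨n, γ, ⟨h0, hl, hadj⟩, hO⟩ := ih
      refine ⟨n + 1, Fin.snoc γ c, ⟨by simpa using h0, by simp, fun i => ?_⟩, fun i => ?_⟩
      · induction i using Fin.lastCases with
        | last => simpa [hl] using hbc.1
        | cast j => rw [Fin.succ_castSucc, Fin.snoc_castSucc, Fin.snoc_castSucc]; exact hadj j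
      · induction i using Fin.lastCases with
        | last => simpa [hl] using hbc.2
        | cast j => rw [Fin.succ_castSucc, Fin.snoc_castSucc, Fin.snoc_castSucc]; exact hO j

def OnUnitSphere (v a : V d) : Prop := (Finset.univ.sup fun j => ((a - v) j).natAbs) = 1

def InUnitBox (v a : V d) : Prop := ∀ k, (a k - v k).natAbs ≤ 1

theorem InUnitBox.update {v a : V d} (ha : InUnitBox v a) {k : Fin d} {t : ℤ}
    (ht : (t - v k).natAbs ≤ 1) : InUnitBox v (update a k t) := by
  intro i
  rcases eq_or_ne i k with rfl | hik
  · simpa using ht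
  · simpa [hik] using ha i

theorem onUnitSphere_iff {v a : V d} : OnUnitSphere v a ↔ InUnitBox v a ∧ ∃ j, a j ≠ v j := by
  simp only [OnUnitSphere, InUnitBox, ← Pi.sub_apply a v]
  constructor
  · intro h
    refine ⟨fun j => h ▸ Finset.le_sup (f := fun j => ((a - v) j).natAbs) (Finset.mem_univ j), ?_⟩
    by_contra! hc
    have : (Finset.univ.sup fun j => ((a - v) j).natAbs) ≤ 0 :=
      Finset.sup_le fun j _ => by simp [hc j]
    omega
  · rintro ⟨hbox, j, hj⟩
    refine le_antisymm (Finset.sup_le fun k _ => hbox k) ?_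
    refine le_trans ?_ (Finset.le_sup (Finset.mem_univ j))
    have : (a - v) j ≠ 0 := sub_ne_zero.2 hj
    omega

theorem adj_update {y : V d} {i : Fin d} {t : ℤ} (h : (y i - t).natAbs = 1) :
    adj y (update y i t) := by
  unfold adj
  rw [Finset.sum_eq_single_of_mem i (Finset.mem_univ i) fun k _ hk => by simp [hk]]
  simp only [update_self, Int.abs_eq_natAbs]
  omega

theorem onUnitSphere_of_adj {a b : V d} (h : adj a b) : OnUnitSphere a b := by
  have hle : ∀ j, |a j - b j| ≤ 1 := fun j =>
    h ▸ Finset.single_le_sum (f := fun i => |a i - b i|) (fun i _ => abs_nonneg _)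
      (Finset.mem_univ j)
  refine onUnitSphere_iff.2 ⟨fun j => ?_, ?_⟩
  · have := hle j
    rw [abs_sub_comm, Int.abs_eq_natAbs] at this
    omega
  · by_contra! hc
    simp [adj, hc] at h

def sphereAdj (v p q : V d) : Prop := adj p q ∧ OnUnitSphere v p ∧ OnUnitSphere v q

/-- As long as the `j`-th coordinate differs from that of `v`, a point of the unit box around `v`
lies on the unit sphere, so any other coordinate can be moved freely. -/
theorem reflTransGen_sphereAdj_update_of_natAbs_le_one {v a : V d} (ha : InUnitBox v a)
    {j k : Fin d} (hj : a j ≠ v j) (hkj : k ≠ j) {t : ℤ} (ht : (t - v k).natAbs ≤ 1)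
    (hat : (a k - t).natAbs ≤ 1) : ReflTransGen (sphereAdj v) a (update a k t) := by
  rcases eq_or_ne (a k) t with rfl | hne
  · rw [update_eq_self]
  · refine .single ⟨adj_update (by omega), onUnitSphere_iff.2 ⟨ha, j, hj⟩,
      onUnitSphere_iff.2 ⟨ha.update ht, j, ?_⟩⟩
    rwa [update_of_ne hkj.symm]

theorem reflTransGen_sphereAdj_update {v a : V d} (ha : InUnitBox v a) {j k : Fin d}
    (hj : a j ≠ v j) (hkj : k ≠ j) {t : ℤ} (ht : (t - v k).natAbs ≤ 1) :
    ReflTransGen (sphereAdj v) a (update a k t) := by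
  have hcenter : ReflTransGen (sphereAdj v) a (update a k (v k)) :=
    reflTransGen_sphereAdj_update_of_natAbs_le_one ha hj hkj (by simp) (ha k)
  have hfar := reflTransGen_sphereAdj_update_of_natAbs_le_one
    (ha.update (k := k) (t := v k) (by simp)) (by rwa [update_of_ne hkj.symm]) hkj ht
    (by rw [update_self]; omega)
  rw [update_idem] at hfar
  exact hcenter.trans hfar

theorem reflTransGen_sphereAdj_of_eq {v a b : V d} (ha : InUnitBox v a) (hb : InUnitBox v b)
    {j : Fin d} (hbj : b j ≠ v j) (hab : a j = b j) : ReflTransGen (sphereAdj v) a b := by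
  classical
  suffices ∀ s : Finset (Fin d), ∀ a, InUnitBox v a → a j = b j → (∀ k ∉ s, a k = b k) →
      ReflTransGen (sphereAdj v) a b from this Finset.univ a ha hab (by simp)
  intro s
  induction s using Finset.induction_on with
  | empty =>
    intro a _ _ h
    rw [funext fun k => h k (Finset.notMem_empty k)]
  | insert k s _ ih =>
    intro a ha haj hout
    have hstep : ReflTransGen (sphereAdj v) a (update a k (b k)) := by
      rcases eq_or_ne k j with rfl | hkj
      · rw [← haj, update_eq_self]
      · exact reflTransGen_sphereAdj_update ha (haj ▸ hbj) hkj (hb k)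
    refine hstep.trans (ih _ (ha.update (hb k)) ?_ fun i hi => ?_)
    · rcases eq_or_ne j k with rfl | hjk
      · simp
      · simpa [hjk] using haj
    · rcases eq_or_ne i k with rfl | hik
      · simp
      · simpa [hik] using hout i (by simp [hik, hi])

theorem reflTransGen_sphereAdj (hd : 2 ≤ d) {v a b : V d} (ha : OnUnitSphere v a)
    (hb : OnUnitSphere v b) : ReflTransGen (sphereAdj v) a b := by
  obtain ⟨ha, j, hj⟩ := onUnitSphere_iff.1 ha
  obtain ⟨hb, k, hk⟩ := onUnitSphere_iff.1 hb
  have hne : ∀ a j, InUnitBox v a → a j ≠ v j → j ≠ k → ReflTransGen (sphereAdj v) a b :=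
    fun a j ha hj hjk =>
      (reflTransGen_sphereAdj_of_eq ha (ha.update (hb k)) (by rwa [update_of_ne hjk]) (by
        rw [update_of_ne hjk])).trans
      (reflTransGen_sphereAdj_of_eq (ha.update (hb k)) hb hk (update_self ..))
  rcases eq_or_ne j k with rfl | hjk
  · have : Nontrivial (Fin d) := Fin.nontrivial_iff_two_le.2 hd
    obtain ⟨i, hij⟩ := exists_ne j
    have ha' : InUnitBox v (update a i (v i + 1)) := ha.update (by simp)
    exact (reflTransGen_sphereAdj_of_eq ha ha' (by rwa [update_of_ne hij.symm])
      (by rw [update_of_ne hij.symm])).trans (hne _ i ha' (by simp) hij)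
  · exact hne a j ha hj hjk

end Lattice

section Shielding
variable {d : ℕ}

/-- A path open in `O` is detoured around each vertex `u ∈ S` it visits along the unit sphere of
`u`, all of whose edges are open in `O'`. The second conjunct keeps the last vertex before `S`. -/
theorem reflTransGen_openAdj_detour (hd : 2 ≤ d) {O O' : Set (Sym2 (V d))} {S : Set (V d)}
    (hS : ∀ u ∈ S, ∀ b, adj u b → b ∉ S)
    (hsphere : ∀ u ∈ S, ∀ a b, OnUnitSphere u a → OnUnitSphere u b → adj a b → s(a, b) ∈ O')
    (hOO' : ∀ a b, adj a b → a ∉ S → b ∉ S → s(a, b) ∈ O → s(a, b) ∈ O')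
    {x y : V d} (hx : x ∉ S) (hxy : ReflTransGen (openAdj O) x y) :
    (y ∉ S → ReflTransGen (openAdj O') x y) ∧
      (y ∈ S → ∃ a, adj a y ∧ ReflTransGen (openAdj O') x a) := by
  induction hxy with
  | refl => exact ⟨fun _ => .refl, fun hy => absurd hy hx⟩
  | @tail b c _ hbc ih =>
    by_cases hb : b ∈ S
    · obtain ⟨a, hab, hxa⟩ := ih.2 hb
      have hac : ReflTransGen (openAdj O') a c :=
        ReflTransGen.mono (fun p q (hpq : sphereAdj b p q) =>
            ⟨hpq.1, hsphere b hb p q hpq.2.1 hpq.2.2 hpq.1⟩) a c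
          (reflTransGen_sphereAdj hd (onUnitSphere_of_adj (adj_comm.1 hab))
            (onUnitSphere_of_adj hbc.1))
      exact ⟨fun _ => hxa.trans hac, fun hc => absurd hc (hS b hb c hbc.1)⟩
    · by_cases hc : c ∈ S
      · exact ⟨fun h => absurd hc h, fun _ => ⟨b, hbc.1, ih.1 hb⟩⟩
      · exact ⟨fun _ => (ih.1 hb).tail ⟨hbc.1, hOO' b c hbc.1 hb hc hbc.2⟩, fun h => absurd h hc⟩

theorem infinite_cluster_of_detour (hd : 2 ≤ d) {O O' : Set (Sym2 (V d))} {S : Set (V d)}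
    (hSfin : S.Finite) (hS : ∀ u ∈ S, ∀ b, adj u b → b ∉ S)
    (hsphere : ∀ u ∈ S, ∀ a b, OnUnitSphere u a → OnUnitSphere u b → adj a b → s(a, b) ∈ O')
    (hOO' : ∀ a b, adj a b → a ∉ S → b ∉ S → s(a, b) ∈ O → s(a, b) ∈ O')
    {x : V d} (hx : x ∉ S) (hinf : (cluster O x).Infinite) : (cluster O' x).Infinite :=
  (hinf.sdiff hSfin).mono fun _ hy => connectedIn_iff_reflTransGen.2
    ((reflTransGen_openAdj_detour hd hS hsphere hOO' hx (connectedIn_iff_reflTransGen.1 hy.1)).1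
      hy.2)

theorem three_dvd_sub_apply {u v : V d} (hu : ∃ z : V d, u = e1 d + 3 • z)
    (hv : ∃ z : V d, v = e1 d + 3 • z) (j : Fin d) : (3 : ℤ) ∣ (u - v) j := by
  obtain ⟨z, rfl⟩ := hu
  obtain ⟨z', rfl⟩ := hv
  exact ⟨z j - z' j, by simp; ring⟩

theorem not_onUnitSphere_of_three_dvd {v a : V d} (h : ∀ j, (3 : ℤ) ∣ (a - v) j) :
    ¬ OnUnitSphere v a := by
  rw [onUnitSphere_iff]
  rintro ⟨hbox, j, hj⟩
  obtain ⟨c, hc⟩ := h j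
  have := hbox j
  rw [Pi.sub_apply] at hc
  omega

theorem sub_e1_ne_of_three_dvd (hd : 0 < d) {u v : V d} (h : ∀ j, (3 : ℤ) ∣ (v - u) j) :
    v - e1 d ≠ u := by
  rintro rfl
  obtain ⟨c, hc⟩ := h ⟨0, hd⟩
  simp [e1] at hc
  omega

theorem shieldSet_eq_of_agree_off (hd : 2 ≤ d) {M : ℝ} {Λ Vset : Finset (V d)}
    (hΛ : ∀ v ∈ Λ, ∃ z : V d, v = e1 d + 3 • z) (hV : Vset ⊆ Λ) {wgt wgt' : Sym2 (V d) → ℝ}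
    (hagree : ∀ a b, adj a b → a ∉ Vset → b ∉ Vset → wgt s(a, b) = wgt' s(a, b))
    (h : shieldSet M wgt Λ = Vset) : shieldSet M wgt' Λ = Vset := by
  have hdvd : ∀ u ∈ Λ, ∀ v ∈ Λ, ∀ j, (3 : ℤ) ∣ (u - v) j := fun u hu v hv =>
    three_dvd_sub_apply (hΛ u hu) (hΛ v hv)
  have hsphere : ∀ u ∈ Λ, ∀ y z, OnUnitSphere u y → OnUnitSphere u z → adj y z →
      wgt s(y, z) = wgt' s(y, z) := fun u hu y z hy hz hyz => hagree y z hyz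
    (fun hyV => not_onUnitSphere_of_three_dvd (hdvd _ (hV hyV) u hu) hy)
    (fun hzV => not_onUnitSphere_of_three_dvd (hdvd _ (hV hzV) u hu) hz)
  have hopen : ∀ u ∈ Vset, ∀ y z, OnUnitSphere u y → OnUnitSphere u z → adj y z →
      wgt s(y, z) ≤ M := fun u hu => (h.symm ▸ hu : u ∈ shieldSet M wgt Λ).2.2
  have hopen' : ∀ u ∈ Vset, ∀ y z, OnUnitSphere u y → OnUnitSphere u z → adj y z →
      wgt' s(y, z) ≤ M := fun u hu y z hy hz hyz =>
    hsphere u (hV hu) y z hy hz hyz ▸ hopen u hu y z hy hz hyz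
  have hnadj : ∀ u ∈ (Vset : Set (V d)), ∀ b, adj u b → b ∉ (Vset : Set (V d)) :=
    fun u hu b hub hb =>
      not_onUnitSphere_of_three_dvd (hdvd _ (hV hb) u (hV hu)) (onUnitSphere_of_adj hub)
  have hcluster : ∀ v ∈ Λ, (cluster {e | wgt e ≤ M} (v - e1 d)).Infinite ↔
      (cluster {e | wgt' e ≤ M} (v - e1 d)).Infinite := by
    intro v hv
    have hx : v - e1 d ∉ (Vset : Set (V d)) := fun hx =>
      sub_e1_ne_of_three_dvd (by omega) (hdvd v hv _ (hV hx)) rfl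
    exact ⟨infinite_cluster_of_detour hd Vset.finite_toSet hnadj hopen'
        (fun a b hab ha hb (hO : wgt _ ≤ M) => (hagree a b hab ha hb ▸ hO : wgt' _ ≤ M)) hx,
      infinite_cluster_of_detour hd Vset.finite_toSet hnadj hopen
        (fun a b hab ha hb (hO : wgt' _ ≤ M) => ((hagree a b hab ha hb).symm ▸ hO : wgt _ ≤ M)) hx⟩
  rw [← h]
  ext v
  refine and_congr_right fun hv => and_congr (hcluster v hv).symm ?_
  exact forall₂_congr fun y z => imp_congr_right fun hy => imp_congr_right fun hz =>
    imp_congr_right fun hyz => by rw [hsphere v hv y z hy hz hyz]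

end Shielding

section Measurability
variable {d : ℕ}

@[fun_prop]
theorem measurable_infinite_cluster (M : ℝ) (x : V d) :
    Measurable fun wgt : Sym2 (V d) → ℝ => (cluster {e | wgt e ≤ M} x).Infinite := by
  simp only [Set.infinite_iff_forall_finset, cluster, ConnectedIn]
  fun_prop

theorem measurableSet_shieldSet_eq (M : ℝ) (Λ Vset : Finset (V d)) :
    MeasurableSet {wgt : Sym2 (V d) → ℝ | shieldSet M wgt Λ = Vset} := by
  simp only [Set.ext_iff, measurableSet_setOfPred, shieldSet]
  fun_prop

end Measurability

section Independence
variable {d : ℕ} {Ω : Type}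

abbrev weightSigma (w : Ω → Sym2 (V d) → ℝ) (S : Set (Edge d)) : MeasurableSpace Ω :=
  ⨆ e ∈ S, MeasurableSpace.comap (fun ω => w ω e.1) inferInstance

theorem measurable_weightSigma_of_dependsOn {γ : Type*} [MeasurableSpace γ]
    (w : Ω → Sym2 (V d) → ℝ) {S : Set (Edge d)} {f : (Sym2 (V d) → ℝ) → γ}
    (hf : Measurable f) (hdep : DependsOn f (Subtype.val '' S)) :
    Measurable[weightSigma w S] fun ω => f (w ω) := by
  refine hf.comp_of_dependsOn hdep ?_
  rintro _ ⟨e, he, rfl⟩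
  exact measurable_iff_comap_le.2 <| le_iSup₂
    (f := fun (e : Edge d) (_ : e ∈ S) => MeasurableSpace.comap (fun ω => w ω e.1) inferInstance)
    e he

theorem IsIIDWeights.indep_weightSigma_compl [MeasurableSpace Ω] {P : Measure Ω} {μ : Measure ℝ}
    {w : Ω → Sym2 (V d) → ℝ} (hiid : IsIIDWeights P μ w) (S : Set (Edge d)) :
    Indep (weightSigma w S) (weightSigma w Sᶜ) P :=
  indep_iSup_of_disjoint (fun e => measurable_iff_comap_le.1 (hiid.1 e))
    ((iIndepFun_iff_iIndep _ _ _).1 hiid.2.1) disjoint_compl_right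

def incidentEdges (Vset : Finset (V d)) : Set (Edge d) := {e | ∃ v ∈ Vset, v ∈ e.1}

theorem dependsOn_ncard_forall_adj_lt (Vset : Finset (V d)) (r : ℝ) :
    DependsOn (fun wgt : Sym2 (V d) → ℝ =>
      {v ∈ (Vset : Set (V d)) | ∀ u : V d, adj v u → r < wgt s(v, u)}.ncard)
      (Subtype.val '' incidentEdges Vset) := by
  intro wgt wgt' h
  refine congrArg Set.ncard (Set.ext fun v => and_congr_right fun hv =>
    forall_congr' fun u => imp_congr_right fun huv => ?_)
  rw [h _ ⟨⟨s(v, u), v, u, huv, rfl⟩, ⟨v, hv, Sym2.mem_mk_left v u⟩, rfl⟩]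

theorem dependsOn_indicator_shieldSet_eq (hd : 2 ≤ d) (M : ℝ) {Λ Vset : Finset (V d)}
    (hΛ : ∀ v ∈ Λ, ∃ z : V d, v = e1 d + 3 • z) (hV : Vset ⊆ Λ) :
    DependsOn ({wgt | shieldSet M wgt Λ = Vset}.indicator fun _ => (1 : ℝ))
      (Subtype.val '' (incidentEdges Vset)ᶜ) := by
  intro wgt wgt' h
  have hagree : ∀ a b, adj a b → a ∉ Vset → b ∉ Vset → wgt s(a, b) = wgt' s(a, b) :=
    fun a b hab ha hb => h _ ⟨⟨s(a, b), a, b, hab, rfl⟩, fun ⟨v, hv, hmem⟩ => by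
      rcases Sym2.mem_iff.1 hmem with rfl | rfl
      exacts [ha hv, hb hv], rfl⟩
  have hiff : shieldSet M wgt Λ = Vset ↔ shieldSet M wgt' Λ = Vset :=
    ⟨shieldSet_eq_of_agree_off hd hΛ hV hagree,
      shieldSet_eq_of_agree_off hd hΛ hV fun a b hab ha hb => (hagree a b hab ha hb).symm⟩
  simp only [Set.indicator_apply, Set.mem_ofPred_eq, hiff]

end Independence

theorem shielding_lemma_general (d : ℕ) (hd : 2 ≤ d)
    {Ω : Type} [MeasurableSpace Ω] (P : Measure Ω)
    (μ : Measure ℝ) (w : Ω → Sym2 (V d) → ℝ)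
    (hiid : IsIIDWeights P μ w) (M : ℝ)
    (Λ : Finset (V d)) (hΛ : ∀ v ∈ Λ, ∃ z : V d, v = e1 d + 3 • z)
    (Vset : Finset (V d)) (hV : Vset ⊆ Λ) (r : ℝ) :
    IndepFun
      (fun ω => {v ∈ (Vset : Set (V d)) | ∀ u : V d, adj v u → r < w ω s(v, u)}.ncard)
      (Set.indicator {ω | shieldSet M (w ω) Λ = (Vset : Set (V d))} fun _ => (1 : ℝ))
      P := by
  have hcount := measurable_weightSigma_of_dependsOn w
    (Finset.measurable_ncard_filter Vset fun v => by fun_prop)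
    (dependsOn_ncard_forall_adj_lt Vset r)
  have hevent := measurable_weightSigma_of_dependsOn w
    (measurable_const.indicator (measurableSet_shieldSet_eq M Λ Vset))
    (dependsOn_indicator_shieldSet_eq hd M hΛ hV)
  rw [IndepFun_iff_Indep]
  exact indep_of_indep_of_le_left
    (indep_of_indep_of_le_right (hiid.indep_weightSigma_compl _) hevent.comap_le) hcount.comap_le

/-- Lemma 3.6 (Shielding lemma): the count `N_{V,r}` of vertices of `V` all of whose incident
edges have weight `> r` is independent of the event `{V_Λ = V}`. -/
theorem shielding_lemma (d : ℕ) (hd : 2 ≤ d)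
    {Ω : Type} [MeasurableSpace Ω] (P : Measure Ω) [IsProbabilityMeasure P]
    (μ : Measure ℝ) [IsProbabilityMeasure μ] (w : Ω → Sym2 (V d) → ℝ)
    (hiid : IsIIDWeights P μ w) (M : ℝ) (hM : 0 < M)
    (Λ : Finset (V d)) (hΛ : ∀ v ∈ Λ, ∃ z : V d, v = e1 d + 3 • z)
    (Vset : Finset (V d)) (hV : Vset ⊆ Λ) (r : ℝ) (hr : 0 < r) :
    IndepFun
      (fun ω => {v ∈ (Vset : Set (V d)) | ∀ u : V d, adj v u → r < w ω s(v, u)}.ncard)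
      (Set.indicator {ω | shieldSet M (w ω) Λ = (Vset : Set (V d))} fun _ => (1 : ℝ))
      P :=
  shielding_lemma_general d hd P μ w hiid M Λ hΛ Vset hV r

end FPPBoundary
end

section
/- Fix d ≥ 2 and let B ⊆ R^d be a compact convex set with 0 in its interior. There exists a constant C > 0 (depending only on d and B) such that for each s > 1, there is a set of at most C s^{d−1} unit vectors v_1, …, v_r in R^d such that every cube y + [0,1)^d with y ∈ Z^d that is completely contained in sB is intersected by at least one of the rays S_{v_i} = {t v_i : t ≥ 0}. -/
open MeasureTheory ProbabilityTheory Filter Set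
open scoped ENNReal NNReal

/-!
Let `‖b‖ ≤ R` on `B`. If the cube `y + [0,1)^d` lies in `sB`, its centre `c` has `‖c‖ ≤ sR`,
and the ray in a unit direction `v` passes within `‖c‖ ‖c/‖c‖ - v‖` of `c`. It therefore
suffices to take an `ε`-net of the unit sphere with `ε < 1/(2sR)`. Such a net of size
`O(N^(d-1))` with `ε = √d/N` is formed by the normalized lattice points on the boundary of `[-N, N]^d`: rescale `c`
to sup-norm `N` and round every coordinate; this moves it by at most `√d/2` while its norm is at
least `N`.
-/

open WithLp

namespace NormedSpace

theorem norm_normalize_sub_normalize_le {E : Type*} [NormedAddCommGroup E] [NormedSpace ℝ E]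
    {x : E} (hx : x ≠ 0) (y : E) :
    ‖normalize x - normalize y‖ ≤ 2 * ‖x - y‖ / ‖x‖ := by
  have hx' : 0 < ‖x‖ := norm_pos_iff.mpr hx
  have hy : ‖normalize y‖ ≤ 1 := by
    by_cases h : y = 0
    · simp [h]
    · exact (norm_normalize h).le
  have key : normalize x - normalize y = ‖x‖⁻¹ • ((x - y) - (‖x‖ - ‖y‖) • normalize y) := by
    rw [smul_sub, sub_smul, norm_smul_normalize, smul_sub, smul_sub, smul_smul,
      inv_mul_cancel₀ hx'.ne', one_smul, normalize]
    abel
  calc ‖normalize x - normalize y‖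
      ≤ ‖x‖⁻¹ * (‖x - y‖ + |‖x‖ - ‖y‖| * ‖normalize y‖) := by
        rw [key, norm_smul, norm_inv, norm_norm]
        gcongr
        exact (norm_sub_le _ _).trans_eq (by rw [norm_smul, Real.norm_eq_abs])
    _ ≤ ‖x‖⁻¹ * (‖x - y‖ + ‖x - y‖ * 1) := by
        gcongr
        exact abs_norm_sub_norm_le x y
    _ = 2 * ‖x - y‖ / ‖x‖ := by ring

end NormedSpace

theorem EuclideanSpace.norm_le_sqrt_card_mul {ι : Type*} [Fintype ι] {x : EuclideanSpace ℝ ι}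
    {a : ℝ} (ha : 0 ≤ a) (hx : ∀ i, |x i| ≤ a) : ‖x‖ ≤ √(Fintype.card ι) * a := by
  rw [EuclideanSpace.norm_eq, ← Real.sqrt_sq ha, ← Real.sqrt_mul (Nat.cast_nonneg _)]
  gcongr
  calc ∑ i, ‖x i‖ ^ 2 ≤ ∑ _i : ι, a ^ 2 := by
        gcongr with i
        rw [Real.norm_eq_abs]
        exact hx i
    _ = Fintype.card ι * a ^ 2 := by simp

theorem exists_pos_mul_abs_le_abs_eq {ι : Type*} [Finite ι] [Nonempty ι] {c : ι → ℝ}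
    (hc : c ≠ 0) {N : ℝ} (hN : 0 < N) : ∃ t > 0, ∃ j, (∀ i, |t * c i| ≤ N) ∧ |t * c j| = N := by
  obtain ⟨j, hj⟩ := Finite.exists_max fun i => |c i|
  have hcj : 0 < |c j| := by
    by_contra! h
    exact hc (funext fun i => abs_nonpos_iff.mp ((hj i).trans h))
  refine ⟨N / |c j|, by positivity, j, fun i => ?_, ?_⟩
  · rw [abs_mul, abs_of_pos (by positivity), div_mul_eq_mul_div, div_le_iff₀ hcj]
    exact mul_le_mul_of_nonneg_left (hj i) hN.le
  · rw [abs_mul, abs_of_pos (by positivity), div_mul_cancel₀ _ hcj.ne']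

namespace FPPBoundary

open scoped Pointwise

theorem l2_ofLp {d : ℕ} (v : EuclideanSpace ℝ (Fin d)) : l2 (ofLp v) = ‖v‖ := by
  simp [l2, EuclideanSpace.norm_eq]

/-- Parametrized by the coordinate `j` that equals `±N` and the remaining `m` coordinates, which
makes the count `(m + 1) * 2 * (2N + 1)^m` immediate. -/
noncomputable def boundaryLatticePoints (m N : ℕ) : Finset (Fin (m + 1) → ℤ) :=
  Finset.image (fun p : Fin (m + 1) × ℤ × (Fin m → ℤ) => p.1.insertNth p.2.1 p.2.2)
    (Finset.univ ×ˢ {-(N : ℤ), (N : ℤ)} ×ˢ Fintype.piFinset fun _ => Finset.Icc (-(N : ℤ)) N)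

theorem card_boundaryLatticePoints_le (m N : ℕ) :
    (boundaryLatticePoints m N).card ≤ (m + 1) * 2 * (2 * N + 1) ^ m := by
  refine Finset.card_image_le.trans ?_
  simp only [Finset.card_product, Finset.card_univ, Fintype.card_fin, Fintype.card_piFinset,
    Int.card_Icc, Finset.prod_const]
  rw [mul_assoc, show (N + 1 - -N : ℤ).toNat = 2 * N + 1 by omega]
  gcongr
  exact Finset.card_le_two

theorem mem_boundaryLatticePoints {m N : ℕ} {z : Fin (m + 1) → ℤ} {j : Fin (m + 1)}
    (hz : ∀ i, |z i| ≤ N) (hj : |z j| = N) : z ∈ boundaryLatticePoints m N := by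
  refine Finset.mem_image.mpr ⟨(j, z j, j.removeNth z), ?_, j.insertNth_self_removeNth z⟩
  simp only [Finset.mem_product, Finset.mem_univ, true_and, Fintype.mem_piFinset,
    Finset.mem_Icc, Finset.mem_insert, Finset.mem_singleton]
  exact ⟨(abs_eq (Int.natCast_nonneg N)).mp hj |>.symm, fun k => abs_le.mp (hz _)⟩

theorem exists_abs_eq_of_mem_boundaryLatticePoints {m N : ℕ} {z : Fin (m + 1) → ℤ}
    (hz : z ∈ boundaryLatticePoints m N) : ∃ j, |z j| = N := by
  obtain ⟨⟨j, a, g⟩, hp, rfl⟩ := Finset.mem_image.mp hz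
  simp only [Finset.mem_product, Finset.mem_insert, Finset.mem_singleton] at hp
  exact ⟨j, by rcases hp.2.1 with rfl | rfl <;> simp⟩

theorem exists_mem_boundaryLatticePoints_near {m N : ℕ} {w : Fin (m + 1) → ℝ} {j : Fin (m + 1)}
    (hw : ∀ i, |w i| ≤ N) (hj : |w j| = N) :
    ∃ z ∈ boundaryLatticePoints m N, ∀ i, |(z i : ℝ) - w i| ≤ 1 / 2 := by
  have hround : ∀ i, |(round (w i) : ℝ) - w i| ≤ 1 / 2 := fun i => by
    rw [abs_sub_comm]; exact abs_sub_round _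
  refine ⟨fun i => round (w i), mem_boundaryLatticePoints (j := j) (fun i => ?_) ?_, hround⟩
  · have : (|round (w i)| : ℝ) < N + 1 := by
      have := abs_sub_abs_le_abs_sub (round (w i) : ℝ) (w i)
      linarith [hround i, hw i]
    have : |round (w i)| < N + 1 := by exact_mod_cast this
    omega
  · rcases (abs_eq (Nat.cast_nonneg N)).mp hj with h | h
    · simp [h]
    · rw [h, ← Int.cast_natCast, ← Int.cast_neg, round_intCast]; simp

theorem le_norm_of_mem_boundaryLatticePoints {m N : ℕ} {z : Fin (m + 1) → ℤ}
    (hz : z ∈ boundaryLatticePoints m N) : (N : ℝ) ≤ ‖toLp 2 fun i => (z i : ℝ)‖ := by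
  obtain ⟨j, hj⟩ := exists_abs_eq_of_mem_boundaryLatticePoints hz
  calc (N : ℝ) = |(z j : ℝ)| := by rw [← Int.cast_abs, hj, Int.cast_natCast]
    _ ≤ _ := PiLp.norm_apply_le (toLp 2 fun i => (z i : ℝ)) j

noncomputable def sphereNet (m N : ℕ) : Finset (EuclideanSpace ℝ (Fin (m + 1))) :=
  (boundaryLatticePoints m N).image fun z => NormedSpace.normalize (toLp 2 fun i => (z i : ℝ))

theorem card_sphereNet_le (m N : ℕ) :
    (sphereNet m N).card ≤ (m + 1) * 2 * (2 * N + 1) ^ m :=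
  Finset.card_image_le.trans (card_boundaryLatticePoints_le m N)

theorem norm_eq_one_of_mem_sphereNet {m N : ℕ} (hN : 0 < N) {v : EuclideanSpace ℝ (Fin (m + 1))}
    (hv : v ∈ sphereNet m N) : ‖v‖ = 1 := by
  obtain ⟨z, hz, rfl⟩ := Finset.mem_image.mp hv
  refine NormedSpace.norm_normalize (norm_pos_iff.mp ?_)
  exact (Nat.cast_pos.mpr hN).trans_le (le_norm_of_mem_boundaryLatticePoints hz)

theorem exists_mem_sphereNet_near {m N : ℕ} (hN : 0 < N) {c : EuclideanSpace ℝ (Fin (m + 1))}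
    (hc : c ≠ 0) : ∃ v ∈ sphereNet m N, ‖NormedSpace.normalize c - v‖ ≤ √(m + 1) / N := by
  have hN' : (0 : ℝ) < N := Nat.cast_pos.mpr hN
  obtain ⟨t, ht, j, hle, heq⟩ := exists_pos_mul_abs_le_abs_eq (c := ofLp c)
    (fun h => hc (by simpa using congrArg (toLp 2) h)) hN'
  obtain ⟨z, hz, hzw⟩ := exists_mem_boundaryLatticePoints_near hle heq
  set x : EuclideanSpace ℝ (Fin (m + 1)) := toLp 2 fun i => (z i : ℝ)
  have hxN : (N : ℝ) ≤ ‖x‖ := le_norm_of_mem_boundaryLatticePoints hz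
  have hx0 : x ≠ 0 := norm_pos_iff.mp (hN'.trans_le hxN)
  have hxw : ‖x - t • c‖ ≤ √(m + 1) * (1 / 2) := by
    simpa using EuclideanSpace.norm_le_sqrt_card_mul (x := x - t • c) (by norm_num) hzw
  refine ⟨NormedSpace.normalize x, Finset.mem_image_of_mem _ hz, ?_⟩
  calc ‖NormedSpace.normalize c - NormedSpace.normalize x‖
      = ‖NormedSpace.normalize x - NormedSpace.normalize (t • c)‖ := by
        rw [NormedSpace.normalize_smul_of_pos ht, norm_sub_rev]
    _ ≤ 2 * ‖x - t • c‖ / ‖x‖ := NormedSpace.norm_normalize_sub_normalize_le hx0 _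
    _ ≤ 2 * (√(m + 1) * (1 / 2)) / N := by gcongr
    _ = √(m + 1) / N := by ring

theorem mem_cube_of_norm_sub_center_lt {d : ℕ} {y : V d} {τ : ℝ}
    {v : EuclideanSpace ℝ (Fin d)} (h : ‖toLp 2 (fun i => (y i : ℝ) + 1 / 2) - τ • v‖ < 1 / 2)
    (i : Fin d) : (y i : ℝ) ≤ τ * v i ∧ τ * v i < y i + 1 := by
  have hi := (PiLp.norm_apply_le _ i).trans_lt h
  simp only [PiLp.sub_apply, PiLp.smul_apply, smul_eq_mul, Real.norm_eq_abs, abs_lt] at hi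
  constructor <;> linarith [hi.1, hi.2]

theorem exists_mem_sphereNet_ray_mem_cube {m N : ℕ} {B : Set (Fin (m + 1) → ℝ)} {R s : ℝ}
    (hs : 0 < s) (hB : ∀ b ∈ B, ‖toLp 2 b‖ ≤ R) (hN : 2 * √(m + 1) * (s * R) < N) (y : V (m + 1))
    (hy : {x : Fin (m + 1) → ℝ | ∀ i, (y i : ℝ) ≤ x i ∧ x i < (y i : ℝ) + 1} ⊆ s • B) :
    ∃ v ∈ sphereNet m N, ∃ τ : ℝ, 0 ≤ τ ∧ ∀ i, (y i : ℝ) ≤ τ * v i ∧ τ * v i < y i + 1 := by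
  set c : EuclideanSpace ℝ (Fin (m + 1)) := toLp 2 fun i => (y i : ℝ) + 1 / 2
  have hcB : ‖c‖ ≤ s * R := by
    have hc : ofLp c ∈ {x : Fin (m + 1) → ℝ | ∀ i, (y i : ℝ) ≤ x i ∧ x i < (y i : ℝ) + 1} :=
      fun i => ⟨by simp [c], by simp [c]; norm_num⟩
    obtain ⟨b, hb, hbc⟩ := hy hc
    have hcb : c = s • toLp 2 b := congrArg (toLp 2) hbc.symm
    rw [hcb, norm_smul, Real.norm_of_nonneg hs.le]
    exact mul_le_mul_of_nonneg_left (hB b hb) hs.le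
  have hc0 : c ≠ 0 := by
    intro h
    have h0 : ((2 * y 0 + 1 : ℤ) : ℝ) = 0 := by
      have := congrArg (fun x : EuclideanSpace ℝ (Fin (m + 1)) => x 0) h
      simp only [c, PiLp.zero_apply] at this
      push_cast; linarith
    have : 2 * y 0 + 1 = 0 := by exact_mod_cast h0
    omega
  have hsR : 0 < s * R := (norm_pos_iff.mpr hc0).trans_le hcB
  have hN0 : (0 : ℝ) < N := (mul_pos (by positivity) hsR).trans hN
  obtain ⟨v, hv, hcv⟩ := exists_mem_sphereNet_near (by exact_mod_cast hN0) hc0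
  refine ⟨v, hv, ‖c‖, norm_nonneg _, mem_cube_of_norm_sub_center_lt ?_⟩
  calc ‖c - ‖c‖ • v‖ = ‖c‖ * ‖NormedSpace.normalize c - v‖ := by
        rw [← norm_norm c, ← norm_smul, smul_sub, NormedSpace.norm_smul_normalize, norm_norm]
    _ ≤ s * R * (√(m + 1) / N) := by gcongr
    _ < 1 / 2 := by
        rw [mul_div_assoc', div_lt_iff₀ hN0]
        linarith

theorem rays_cover_cubes_general (d : ℕ) (hd : 2 ≤ d) (B : Set (Fin d → ℝ))
    (hBcompact : IsCompact B) :
    ∃ C : ℝ, 0 < C ∧ ∀ s : ℝ, 1 < s →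
      ∃ F : Finset (Fin d → ℝ),
        (∀ v ∈ F, l2 v = 1) ∧
        (F.card : ℝ) ≤ C * s ^ (d - 1) ∧
        ∀ y : V d,
          {x : Fin d → ℝ | ∀ i, (y i : ℝ) ≤ x i ∧ x i < (y i : ℝ) + 1} ⊆ s • B →
          ∃ v ∈ F, ∃ τ : ℝ, 0 ≤ τ ∧ ∀ i, (y i : ℝ) ≤ τ * v i ∧ τ * v i < (y i : ℝ) + 1 := by
  obtain ⟨m, rfl⟩ : ∃ m, d = m + 1 := ⟨d - 1, by omega⟩
  obtain ⟨R, hR, hB⟩ : ∃ R > 0, ∀ b ∈ B, ‖toLp 2 b‖ ≤ R := by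
    simpa using (hBcompact.image (PiLp.continuous_toLp 2 _)).isBounded.exists_pos_norm_le
  set K := 4 * √(m + 1) * R + 3
  refine ⟨2 * (m + 1) * K ^ m, by positivity, fun s hs => ?_⟩
  obtain ⟨N, hN, hNK⟩ : ∃ N : ℕ, 2 * √(m + 1) * (s * R) < N ∧ (2 * N + 1 : ℝ) ≤ K * s := by
    refine ⟨⌊2 * √(m + 1) * (s * R)⌋₊ + 1, by push_cast; exact Nat.lt_floor_add_one _, ?_⟩
    have := Nat.floor_le (a := 2 * √(m + 1) * (s * R)) (by positivity)
    have : 0 ≤ √(m + 1 : ℝ) * R := by positivity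
    push_cast; nlinarith
  have hN0 : 0 < N := by exact_mod_cast (by positivity : (0 : ℝ) < 2 * √(m + 1) * (s * R)).trans hN
  refine ⟨(sphereNet m N).image ofLp, ?_, ?_, fun y hy => ?_⟩
  · rintro _ hw
    obtain ⟨v, hv, rfl⟩ := Finset.mem_image.mp hw
    rw [l2_ofLp, norm_eq_one_of_mem_sphereNet hN0 hv]
  · calc (((sphereNet m N).image ofLp).card : ℝ) ≤ ((m + 1) * 2 * (2 * N + 1) ^ m : ℕ) := by
          exact_mod_cast Finset.card_image_le.trans (card_sphereNet_le m N)
      _ ≤ 2 * (m + 1) * (K * s) ^ m := by push_cast; rw [mul_comm _ (2 : ℝ)]; gcongr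
      _ = 2 * (m + 1) * K ^ m * s ^ (m + 1 - 1) := by rw [mul_pow, Nat.add_sub_cancel]; ring
  · obtain ⟨v, hv, τ, hτ, hcube⟩ :=
      exists_mem_sphereNet_ray_mem_cube (by linarith) hB hN y hy
    exact ⟨ofLp v, Finset.mem_image_of_mem _ hv, τ, hτ, hcube⟩

/-- Lemma 3.8: one can choose about `s^{d-1}` rays from the origin so that every unit lattice
cube contained in `sB` is intersected by one of the rays. -/
theorem rays_cover_cubes (d : ℕ) (hd : 2 ≤ d) (B : Set (Fin d → ℝ))
    (hBcompact : IsCompact B) (hBconvex : Convex ℝ B) (hB0 : (0 : Fin d → ℝ) ∈ interior B) :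
    ∃ C : ℝ, 0 < C ∧ ∀ s : ℝ, 1 < s →
      ∃ F : Finset (Fin d → ℝ),
        (∀ v ∈ F, l2 v = 1) ∧
        (F.card : ℝ) ≤ C * s ^ (d - 1) ∧
        ∀ y : V d,
          {x : Fin d → ℝ | ∀ i, (y i : ℝ) ≤ x i ∧ x i < (y i : ℝ) + 1} ⊆ s • B →
          ∃ v ∈ F, ∃ τ : ℝ, 0 ≤ τ ∧ ∀ i, (y i : ℝ) ≤ τ * v i ∧ τ * v i < (y i : ℝ) + 1 :=
  rays_cover_cubes_general d hd B hBcompact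

end FPPBoundary
end
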